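/- The set D̂* of marked distance matrices (r,v) ∈ D̂ (r a pseudometric on ℕ, v : ℕ → ℝ≥0) such that the empirical measures mⁿ = n⁻¹Σ_{i=1}ⁿ δ_{(i,v(i))} on the completion X of (ℕ,r) times ℝ≥0 converge weakly, is a Borel measurable subset of D̂. -/

import Mathlib

/-!
The Prohorov distance of two measures is an infimum over admissible radii, and admissibility is
monotone in the radius, so `prohorovDist ≤ c` is the countable conjunction "every rational
`q > c` is admissible". For empirical measures on the graph `{(i, v i)}` only the finitely many
sets `F = {(i, v i) | i ∈ s}`, `s ⊆ range m`, matter in the Prohorov condition, and each of these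
is a finite Boolean combination of the inequalities `max (r i j) |v i - v j| < q`. Hence every
Prohorov distance between two empirical measures is a Borel function of `(r, v)`, and the Cauchy
condition is a countable combination of sublevel sets of these functions.
-/

open MeasureTheory
open scoped ENNReal

/-- The Prohorov distance of two measures with respect to a distance function `d`. -/
noncomputable def prohorovDist {α : Type*} [MeasurableSpace α]
    (d : α → α → ℝ) (μ ν : Measure α) : ℝ :=
  sInf {ε : ℝ | 0 < ε ∧
    (∀ F : Set α, μ F ≤ ν {y | ∃ x ∈ F, d x y < ε} + ENNReal.ofReal ε) ∧
    (∀ F : Set α, ν F ≤ μ {y | ∃ x ∈ F, d x y < ε} + ENNReal.ofReal ε)}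

/-- The `n`-th empirical measure `n⁻¹ ∑_{i<n} δ_{(i,v(i))}` on `ℕ × ℝ`. -/
noncomputable def empMeas (v : ℕ → ℝ) (n : ℕ) : Measure (ℕ × ℝ) :=
  ((n : ℝ≥0∞))⁻¹ • ∑ i ∈ Finset.range n, Measure.dirac ((i, v i) : ℕ × ℝ)

open Set
open scoped Finset

section Prohorov

variable {α : Type*} [MeasurableSpace α] (d : α → α → ℝ)

def ProhorovBound (μ ν : Measure α) (ε : ℝ) : Prop :=
  ∀ F : Set α, μ F ≤ ν {y | ∃ x ∈ F, d x y < ε} + ENNReal.ofReal ε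

def prohorovRadii (μ ν : Measure α) : Set ℝ :=
  {ε | 0 < ε ∧ ProhorovBound d μ ν ε ∧ ProhorovBound d ν μ ε}

variable {d} {μ ν : Measure α} {ε ε' : ℝ}

theorem prohorovDist_eq_sInf_prohorovRadii :
    prohorovDist d μ ν = sInf (prohorovRadii d μ ν) := rfl

theorem ProhorovBound.mono (h : ProhorovBound d μ ν ε) (hε : ε ≤ ε') :
    ProhorovBound d μ ν ε' := fun F =>
  (h F).trans <| add_le_add
    (measure_mono fun _ ⟨x, hx, hxy⟩ => ⟨x, hx, hxy.trans_le hε⟩) (ENNReal.ofReal_le_ofReal hε)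

theorem prohorovBound_of_measure_univ_le (h : μ univ ≤ ENNReal.ofReal ε) :
    ProhorovBound d μ ν ε := fun F =>
  ((measure_mono (subset_univ F)).trans h).trans le_add_self

theorem mem_prohorovRadii_of_le (h : ε ∈ prohorovRadii d μ ν) (hε : ε ≤ ε') :
    ε' ∈ prohorovRadii d μ ν :=
  ⟨h.1.trans_le hε, h.2.1.mono hε, h.2.2.mono hε⟩

theorem prohorovRadii_nonempty [IsFiniteMeasure μ] [IsFiniteMeasure ν] :
    (prohorovRadii d μ ν).Nonempty := by
  set ε := max (μ univ).toReal (ν univ).toReal + 1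
  have hε : 0 < ε := by positivity
  have hμ : μ univ ≤ ENNReal.ofReal ε := (ENNReal.le_ofReal_iff_toReal_le (measure_ne_top μ univ)
    hε.le).mpr (by linarith [le_max_left (μ univ).toReal (ν univ).toReal])
  have hν : ν univ ≤ ENNReal.ofReal ε := (ENNReal.le_ofReal_iff_toReal_le (measure_ne_top ν univ)
    hε.le).mpr (by linarith [le_max_right (μ univ).toReal (ν univ).toReal])
  exact ⟨ε, hε, prohorovBound_of_measure_univ_le hμ, prohorovBound_of_measure_univ_le hν⟩

theorem prohorovDist_le_iff [IsFiniteMeasure μ] [IsFiniteMeasure ν] (c : ℝ) :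
    prohorovDist d μ ν ≤ c ↔ ∀ q : ℚ, c < q → (q : ℝ) ∈ prohorovRadii d μ ν := by
  rw [prohorovDist_eq_sInf_prohorovRadii]
  constructor
  · intro h q hq
    obtain ⟨ε, hε, hεq⟩ := exists_lt_of_csInf_lt prohorovRadii_nonempty (h.trans_lt hq)
    exact mem_prohorovRadii_of_le hε hεq.le
  · refine fun h => le_of_forall_gt fun c' hc' => ?_
    obtain ⟨q, hcq, hqc'⟩ := exists_rat_btwn hc'
    exact (csInf_le ⟨0, fun _ hx => hx.1.le⟩ (h q hcq)).trans_lt hqc'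

end Prohorov

section Empirical

theorem empMeas_apply (v : ℕ → ℝ) (n : ℕ) (s : Set (ℕ × ℝ)) [DecidablePred (· ∈ s)] :
    empMeas v n s = (n : ℝ≥0∞)⁻¹ * #{i ∈ Finset.range n | (i, v i) ∈ s} := by
  simp [empMeas, Measure.dirac_apply, Set.indicator_apply, Finset.sum_boole]

theorem empMeas_univ_le_one (v : ℕ → ℝ) (n : ℕ) : empMeas v n univ ≤ 1 := by
  classical
  simp [empMeas_apply, ENNReal.inv_mul_le_one]

instance (v : ℕ → ℝ) (n : ℕ) : IsFiniteMeasure (empMeas v n) :=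
  ⟨(empMeas_univ_le_one v n).trans_lt ENNReal.one_lt_top⟩

theorem prohorovBound_empMeas_iff (d : ℕ × ℝ → ℕ × ℝ → ℝ) (v : ℕ → ℝ) (m n : ℕ) (ε : ℝ) :
    ProhorovBound d (empMeas v m) (empMeas v n) ε ↔
      ∀ s ∈ (Finset.range m).powerset, (m : ℝ≥0∞)⁻¹ * s.card ≤
        (n : ℝ≥0∞)⁻¹ * #{j ∈ Finset.range n | ∃ i ∈ s, d (i, v i) (j, v j) < ε}
          + ENNReal.ofReal ε := by
  classical
  have thickening_filter (F : Set (ℕ × ℝ)) :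
      empMeas v n {y | ∃ x ∈ F, d x y < ε} =
        (n : ℝ≥0∞)⁻¹ * #{j ∈ Finset.range n | ∃ x ∈ F, d x (j, v j) < ε} := by
    rw [empMeas_apply]; rfl
  constructor
  · intro h s hs
    simpa [empMeas_apply, thickening_filter, exists_mem_image, Finset.filter_mem_eq_inter,
      Finset.inter_eq_right.mpr (Finset.mem_powerset.mp hs)] using
      h ((fun i => (i, v i)) '' (s : Set ℕ))
  · intro h F
    set s := {i ∈ Finset.range m | (i, v i) ∈ F}
    calc empMeas v m F = (m : ℝ≥0∞)⁻¹ * s.card := empMeas_apply v m F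
      _ ≤ (n : ℝ≥0∞)⁻¹ * #{j ∈ Finset.range n | ∃ i ∈ s, d (i, v i) (j, v j) < ε}
          + ENNReal.ofReal ε := h s (Finset.mem_powerset.mpr (Finset.filter_subset _ _))
      _ ≤ empMeas v n {y | ∃ x ∈ F, d x y < ε} + ENNReal.ofReal ε := by
        rw [thickening_filter]
        gcongr with j
        exact fun ⟨i, hi, hij⟩ => ⟨_, (Finset.mem_filter.mp hi).2, hij⟩

end Empirical

section Measurability

variable {β : Type*} [MeasurableSpace β]

theorem measurable_card_filter {ι : Type*} (s : Finset ι) {p : β → ι → Prop}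
    [∀ b, DecidablePred (p b)] (hp : ∀ i, MeasurableSet {b | p b i}) :
    Measurable fun b => (#{i ∈ s | p b i} : ℝ≥0∞) := by
  simp only [Finset.card_filter, Nat.cast_sum, Nat.cast_ite, Nat.cast_one, Nat.cast_zero]
  exact Finset.measurable_sum s fun i _ => Measurable.ite (hp i) measurable_const measurable_const

theorem measurableSet_forall_pos_exists_forall_ge_le {g : ℕ → ℕ → β → ℝ}
    (hg : ∀ m n, Measurable (g m n)) :
    MeasurableSet {b | ∀ ε : ℝ, 0 < ε → ∃ N : ℕ, ∀ m ≥ N, ∀ n ≥ N, g m n b ≤ ε} := by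
  have hset : {b | ∀ ε : ℝ, 0 < ε → ∃ N : ℕ, ∀ m ≥ N, ∀ n ≥ N, g m n b ≤ ε} =
      ⋂ k : ℕ, {b | ∃ N : ℕ, ∀ m ≥ N, ∀ n ≥ N, g m n b ≤ 1 / (k + 1)} := by
    ext b
    simp only [mem_ofPred_eq, mem_iInter]
    refine ⟨fun h k => h _ Nat.one_div_pos_of_nat, fun h ε hε => ?_⟩
    obtain ⟨k, hk⟩ := exists_nat_one_div_lt hε
    obtain ⟨N, hN⟩ := h k
    exact ⟨N, fun m hm n hn => (hN m hm n hn).trans hk.le⟩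
  rw [hset]
  simp only [ofPred_exists, ofPred_forall]
  exact .iInter fun k => .iUnion fun N => .iInter fun m => .iInter fun _ =>
    .iInter fun n => .iInter fun _ => measurableSet_le (hg m n) measurable_const

end Measurability

def markedDist (r : ℕ → ℕ → ℝ) (p q : ℕ × ℝ) : ℝ := max (r p.1 q.1) |p.2 - q.2|

theorem measurableSet_prohorovBound_empMeas (m n : ℕ) (ε : ℝ) :
    MeasurableSet {rv : (ℕ → ℕ → ℝ) × (ℕ → ℝ) |
      ProhorovBound (markedDist rv.1) (empMeas rv.2 m) (empMeas rv.2 n) ε} := by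
  simp only [prohorovBound_empMeas_iff, ofPred_forall]
  refine .iInter fun s => .iInter fun _ => measurableSet_le measurable_const ?_
  refine ((measurable_card_filter _ fun j => ?_).const_mul _).add_const _
  simp only [markedDist, ofPred_exists, ofPred_and]
  measurability

theorem measurable_prohorovDist_empMeas (m n : ℕ) :
    Measurable fun rv : (ℕ → ℕ → ℝ) × (ℕ → ℝ) =>
      prohorovDist (markedDist rv.1) (empMeas rv.2 m) (empMeas rv.2 n) := by
  refine measurable_of_Iic fun c => ?_
  simp only [preimage, mem_Iic, prohorovDist_le_iff, prohorovRadii, ofPred_forall, ofPred_and]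
  exact .iInter fun q => .iInter fun _ => (MeasurableSet.const _).inter
    ((measurableSet_prohorovBound_empMeas m n q).inter (measurableSet_prohorovBound_empMeas n m q))

theorem measurableSet_pseudometric_nonneg_marks :
    MeasurableSet {rv : (ℕ → ℕ → ℝ) × (ℕ → ℝ) |
      (∀ i, rv.1 i i = 0) ∧ (∀ i j, 0 ≤ rv.1 i j) ∧ (∀ i j, rv.1 i j = rv.1 j i) ∧
        (∀ i j k, rv.1 i k ≤ rv.1 i j + rv.1 j k) ∧ (∀ i, 0 ≤ rv.2 i)} := by
  simp only [ofPred_and, ofPred_forall]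
  measurability

/-- The set `D̂*` of marked distance matrices `(r,v)` (with `r` a pseudometric on `ℕ` and
`v ≥ 0`) whose empirical measures `mⁿ = n⁻¹ ∑_{i<n} δ_{(i,v(i))}` converge weakly on the
completion of `(ℕ,r) × ℝ≥0` — equivalently, are Cauchy for the Prohorov metric associated
with the distance `d((i,u),(j,u')) = max (r i j) |u−u'|` — is a Borel subset. -/
theorem stmt13 :
    MeasurableSet {rv : (ℕ → ℕ → ℝ) × (ℕ → ℝ) |
      ((∀ i, rv.1 i i = 0) ∧ (∀ i j, 0 ≤ rv.1 i j) ∧ (∀ i j, rv.1 i j = rv.1 j i) ∧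
        (∀ i j k, rv.1 i k ≤ rv.1 i j + rv.1 j k) ∧ (∀ i, 0 ≤ rv.2 i)) ∧
      (∀ ε : ℝ, 0 < ε → ∃ N : ℕ, ∀ m ≥ N, ∀ n ≥ N,
        prohorovDist (fun p q : ℕ × ℝ => max (rv.1 p.1 q.1) |p.2 - q.2|)
          (empMeas rv.2 (m + 1)) (empMeas rv.2 (n + 1)) ≤ ε)} :=
  measurableSet_pseudometric_nonneg_marks.inter <|
    measurableSet_forall_pos_exists_forall_ge_le fun m n =>
      measurable_prohorovDist_empMeas (m + 1) (n + 1)
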